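/- For all b,d,ν>0 and every nonnegative integer n, the limit as α→+∞ of p_n(x;α,b,d,ν) exists for every real x, and there exist a nonzero real ρ', a real σ' and a nonzero real p such that this limit equals ρ'^n·k̂_n(ρ'^{−1}x−σ'; p, bν) for all real x; that is, in the limit α→∞ the rescaled monic Racah polynomials become rescaled monic Krawtchouk polynomials with N = bν. -/

import Mathlib

open Filter Real

/-- Pochhammer symbol `(a)_m = a (a+1) ⋯ (a+m-1)`. -/
noncomputable def poch (a : ℝ) (m : ℕ) : ℝ := ∏ j ∈ Finset.range m, (a + j)

/-- Monic Hermite polynomial of degree `n`. -/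
noncomputable def monicHermite (n : ℕ) (x : ℝ) : ℝ :=
  (n.factorial : ℝ) * ∑ m ∈ Finset.range (n / 2 + 1),
    (-1 : ℝ) ^ m * x ^ (n - 2 * m) / (4 ^ m * m.factorial * (n - 2 * m).factorial)

/-- Monic Laguerre polynomial of degree `n` with parameter `α`. -/
noncomputable def monicLaguerre (α : ℝ) (n : ℕ) (x : ℝ) : ℝ :=
  (-1 : ℝ) ^ n * n.factorial * ∑ k ∈ Finset.range (n + 1),
    (-1 : ℝ) ^ k * (poch (α + k + 1) (n - k) / ((n - k).factorial * k.factorial)) * x ^ k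

/-- Monic Jacobi polynomial of degree `n` with parameters `α, β`. -/
noncomputable def monicJacobi (α β : ℝ) (n : ℕ) (x : ℝ) : ℝ :=
  ((n.factorial : ℝ) / poch (n + α + β + 1) n) *
    ∑ k ∈ Finset.range (n + 1),
      (poch (n + α - k + 1) k / k.factorial) *
      (poch (β + k + 1) (n - k) / (n - k).factorial) *
      (x - 1) ^ (n - k) * (x + 1) ^ k

/-- Monic Racah polynomial of degree `n` in the variable `y`. -/
noncomputable def monicRacah (α β N δ : ℝ) (n : ℕ) (y : ℝ) : ℝ :=
  (1 / poch (n + α + β + 1) n) *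
    ∑ k ∈ Finset.range (n + 1),
      (poch (-(n : ℝ)) k * poch (n + α + β + 1) k / k.factorial) *
      poch (α + k + 1) (n - k) * poch (β + δ + k + 1) (n - k) * poch (k - N) (n - k) *
      ∏ j ∈ Finset.range k, ((j : ℝ) * (j + δ - N) - y)

/-- Monic Hahn polynomial of degree `n`. -/
noncomputable def monicHahn (α β N : ℝ) (n : ℕ) (x : ℝ) : ℝ :=
  (1 / poch (n + α + β + 1) n) *
    ∑ k ∈ Finset.range (n + 1),
      (poch (-(n : ℝ)) k * poch (n + α + β + 1) k * poch (-x) k / k.factorial) *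
      poch (α + k + 1) (n - k) * poch (k - N) (n - k)

/-- Monic Meixner polynomial of degree `n`. -/
noncomputable def monicMeixner (b c : ℝ) (n : ℕ) (x : ℝ) : ℝ :=
  (c / (c - 1)) ^ n * ∑ k ∈ Finset.range (n + 1),
    (poch (-(n : ℝ)) k * poch (-x) k / k.factorial) * poch (b + k) (n - k) * (1 - 1 / c) ^ k

/-- Monic Krawtchouk polynomial of degree `n`. -/
noncomputable def monicKrawtchouk (p N : ℝ) (n : ℕ) (x : ℝ) : ℝ :=
  p ^ n * ∑ k ∈ Finset.range (n + 1),
    (poch (-(n : ℝ)) k * poch (-x) k / k.factorial) * poch (k - N) (n - k) * (1 / p) ^ k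

/-- `ρ = (α+β)^{3/2} / (αβ)^{1/2}`. -/
noncomputable def jacobiRho (α β : ℝ) : ℝ := (α + β) ^ ((3 : ℝ) / 2) / Real.sqrt (α * β)

/-- `σ = (α-β)/(α+β)`. -/
noncomputable def jacobiSigma (α β : ℝ) : ℝ := (α - β) / (α + β)

/-- Uniformly rescaled monic Jacobi polynomial `p_n(x; α, β) = ρ^n p_n^{(α,β)}(ρ⁻¹x - σ)`. -/
noncomputable def rescaledJacobi (α β : ℝ) (n : ℕ) (x : ℝ) : ℝ :=
  jacobiRho α β ^ n * monicJacobi α β n (x / jacobiRho α β - jacobiSigma α β)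

/-- `ρ = ((α+β)³/(αβ(β+δ)(N+α+β)(δ-α)N))^{1/2}` with `β = bα`, `δ = (bdν+1)α`, `N = bν`. -/
noncomputable def racahRho (α b d ν : ℝ) : ℝ :=
  Real.sqrt ((α + b * α) ^ 3 /
    (α * (b * α) * (b * α + (b * d * ν + 1) * α) * (b * ν + α + b * α) *
      ((b * d * ν + 1) * α - α) * (b * ν)))

/-- `σ = -N(α+1)(β+δ+1)/(α+β+2)` with `β = bα`, `δ = (bdν+1)α`, `N = bν`. -/
noncomputable def racahSigma (α b d ν : ℝ) : ℝ :=
  -((b * ν) * (α + 1) * (b * α + (b * d * ν + 1) * α + 1)) / (α + b * α + 2)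

/-- Rescaled monic Racah polynomial `p_n(x; α, b, d, ν) = ρ^n r_n(ρ⁻¹x - σ; α, bα, bν, (bdν+1)α)`. -/
noncomputable def rescaledRacah (α b d ν : ℝ) (n : ℕ) (x : ℝ) : ℝ :=
  racahRho α b d ν ^ n *
    monicRacah α (b * α) (b * ν) ((b * d * ν + 1) * α) n
      (x / racahRho α b d ν - racahSigma α b d ν)
lemma poch_pos {a : ℝ} (ha : 0 < a) (k : ℕ) : 0 < poch a k := by
  unfold poch
  exact Finset.prod_pos fun j _ => by positivity

lemma racah_factor_prod (s δ N y : ℝ) (hy : y = s * (s + (δ - N))) (k : ℕ) :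
    ∏ j ∈ Finset.range k, ((j : ℝ) * ((j:ℝ) + δ - N) - y)
      = poch (-s) k * poch (s + (δ - N)) k := by
  subst hy
  rw [poch, poch, ← Finset.prod_mul_distrib]
  exact Finset.prod_congr rfl fun j _ => by ring

lemma tendsto_poch_comp {α : Type*} {l : Filter α} {f : α → ℝ} {a : ℝ}
    (hf : Filter.Tendsto f l (nhds a)) (k : ℕ) :
    Filter.Tendsto (fun t => poch (f t) k) l (nhds (poch a k)) := by
  unfold poch
  exact tendsto_finset_prod _ fun j _ => hf.add tendsto_const_nhds

lemma tendsto_poch_div_pow {u : ℝ → ℝ} {L : ℝ}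
    (hu : Filter.Tendsto (fun α => u α / α) Filter.atTop (nhds L)) (k : ℕ) :
    Filter.Tendsto (fun α => poch (u α) k / α ^ k) Filter.atTop (nhds (L ^ k)) := by
  have h1 : (fun α : ℝ => ∏ j ∈ Finset.range k, ((u α + j) / α)) =ᶠ[Filter.atTop]
      (fun α => poch (u α) k / α ^ k) := by
    filter_upwards [Filter.eventually_gt_atTop 0] with α hα
    rw [Finset.prod_div_distrib, Finset.prod_const, Finset.card_range, poch]
  rw [show L ^ k = ∏ _j ∈ Finset.range k, L by
    rw [Finset.prod_const, Finset.card_range]]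
  refine Filter.Tendsto.congr' h1 (tendsto_finset_prod _ fun j _ => ?_)
  have h2 : Filter.Tendsto (fun α : ℝ => u α / α + (j:ℝ) * α⁻¹) Filter.atTop
      (nhds (L + (j:ℝ) * 0)) := hu.add (tendsto_inv_atTop_zero.const_mul _)
  simpa [add_div, div_eq_mul_inv, add_mul] using h2

lemma tendsto_affine_div (a c : ℝ) :
    Filter.Tendsto (fun α : ℝ => (a * α + c) / α) Filter.atTop (nhds a) := by
  have h2 : Filter.Tendsto (fun α : ℝ => a + c * α⁻¹) Filter.atTop (nhds (a + c * 0)) :=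
    tendsto_const_nhds.add (tendsto_inv_atTop_zero.const_mul _)
  refine Filter.Tendsto.congr' ?_ (by simpa using h2)
  filter_upwards [Filter.eventually_gt_atTop 0] with α hα
  field_simp

noncomputable def racahY (b d ν x α : ℝ) : ℝ := x / racahRho α b d ν - racahSigma α b d ν

noncomputable def racahD (b d ν α : ℝ) : ℝ := (b * d * ν + 1) * α - b * ν

noncomputable def racahS (b d ν x α : ℝ) : ℝ :=
  (Real.sqrt (racahD b d ν α ^ 2 + 4 * racahY b d ν x α) - racahD b d ν α) / 2

lemma tendsto_linear_ratio {A C e f : ℝ} (hC : C ≠ 0) (he : 0 ≤ e) (hf : 0 < f) :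
    Filter.Tendsto (fun α : ℝ => A * α / (C * (e + f * α))) Filter.atTop
      (nhds (A / (C * f))) := by
  have hW : Filter.Tendsto (fun α : ℝ => A / (C * (e * α⁻¹ + f))) Filter.atTop
      (nhds (A / (C * (e * 0 + f)))) := by
    refine tendsto_const_nhds.div
      (tendsto_const_nhds.mul ((tendsto_inv_atTop_zero.const_mul _).add tendsto_const_nhds)) ?_
    rw [mul_zero, zero_add]
    exact mul_ne_zero hC hf.ne'
  rw [mul_zero, zero_add] at hW
  refine Filter.Tendsto.congr' ?_ hW
  filter_upwards [Filter.eventually_gt_atTop 0] with α hα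
  have h1 : e + f * α > 0 := by positivity
  have h2 : e * α⁻¹ + f > 0 := by positivity
  field_simp

lemma lim_rho {b d ν : ℝ} (hb : 0 < b) (hd : 0 < d) (hν : 0 < ν) :
    Filter.Tendsto (fun α : ℝ => α * racahRho α b d ν) Filter.atTop
      (nhds (Real.sqrt ((1+b)^2 / (b * (b + b*d*ν + 1) * (b*d*ν) * (b*ν))))) := by
  have h1b : (0:ℝ) < 1 + b := by linarith
  have hC : (b * (b + b*d*ν + 1) * (b*d*ν) * (b*ν)) ≠ 0 := by positivity
  have hW := (tendsto_linear_ratio (A := (1+b)^3) hC (le_of_lt (by positivity : (0:ℝ) < b*ν))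
      h1b).sqrt
  have hval : (1+b)^3 / (b * (b + b*d*ν + 1) * (b*d*ν) * (b*ν) * (1+b))
      = (1+b)^2 / (b * (b + b*d*ν + 1) * (b*d*ν) * (b*ν)) := by
    field_simp
  rw [hval] at hW
  refine Filter.Tendsto.congr' ?_ hW
  filter_upwards [Filter.eventually_gt_atTop 0] with α hα
  rw [racahRho, show α * Real.sqrt ((α + b * α) ^ 3 /
    (α * (b * α) * (b * α + (b * d * ν + 1) * α) * (b * ν + α + b * α) *
      ((b * d * ν + 1) * α - α) * (b * ν)))
    = Real.sqrt (α^2 * ((α + b * α) ^ 3 /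
    (α * (b * α) * (b * α + (b * d * ν + 1) * α) * (b * ν + α + b * α) *
      ((b * d * ν + 1) * α - α) * (b * ν)))) from by
      rw [Real.sqrt_mul (sq_nonneg α), Real.sqrt_sq hα.le]]
  congr 1
  have h6 : (0:ℝ) < (b*d*ν+1)*α - α := by nlinarith [mul_pos (mul_pos (mul_pos hb hd) hν) hα]
  have hden : α * (b * α) * (b * α + (b * d * ν + 1) * α) * (b * ν + α + b * α) *
      ((b * d * ν + 1) * α - α) * (b * ν) ≠ 0 := by
    have h2 : (0:ℝ) < b * α := by positivity
    have h3 : (0:ℝ) < b * α + (b*d*ν+1)*α := by positivity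
    have h4 : (0:ℝ) < b * ν + α + b * α := by positivity
    have h5 : (0:ℝ) < b * ν := by positivity
    exact (mul_pos (mul_pos (mul_pos (mul_pos (mul_pos hα h2) h3) h4) h6) h5).ne'
  have hdeng : (b * (b + b*d*ν + 1) * (b*d*ν) * (b*ν)) * (b*ν + (1+b)*α) ≠ 0 := by
    positivity
  rw [mul_div_assoc' (α^2), div_eq_div_iff hdeng hden]
  ring

lemma lim_sigma {b d ν : ℝ} (hb : 0 < b) (hd : 0 < d) (hν : 0 < ν) :
    Filter.Tendsto (fun α : ℝ => racahSigma α b d ν / α) Filter.atTop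
      (nhds (-(b*ν*(b + b*d*ν + 1)/(1+b)))) := by
  have h1b : (0:ℝ) < 1 + b := by linarith
  have hW : Filter.Tendsto
      (fun α : ℝ => -(b*ν*(1+α⁻¹)*((b + b*d*ν + 1) + α⁻¹))/((1+b) + 2*α⁻¹))
      Filter.atTop (nhds (-(b*ν*(1+0)*((b + b*d*ν + 1) + 0))/((1+b) + 2*0))) := by
    refine Filter.Tendsto.div ?_ ?_ ?_
    · exact (((tendsto_const_nhds.add tendsto_inv_atTop_zero).const_mul _).mul
        (tendsto_const_nhds.add tendsto_inv_atTop_zero)).neg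
    · exact tendsto_const_nhds.add (tendsto_inv_atTop_zero.const_mul _)
    · rw [mul_zero, add_zero]
      exact h1b.ne'
  have hval : -(b*ν*(1+(0:ℝ))*((b + b*d*ν + 1) + 0))/((1+b) + 2*0)
      = -(b*ν*(b + b*d*ν + 1)/(1+b)) := by
    rw [mul_zero, add_zero, add_zero, add_zero]
    ring
  rw [hval] at hW
  refine Filter.Tendsto.congr' ?_ hW
  filter_upwards [Filter.eventually_gt_atTop 0] with α hα
  have hα' : α ≠ 0 := hα.ne'
  have hd1 : α + b*α + 2 ≠ 0 := by positivity
  have hd2 : (1+b) + 2*α⁻¹ ≠ 0 := by positivity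
  rw [racahSigma]
  field_simp
  ring

lemma lim_y {b d ν : ℝ} (hb : 0 < b) (hd : 0 < d) (hν : 0 < ν) (x : ℝ) :
    Filter.Tendsto (fun α : ℝ => racahY b d ν x α / α) Filter.atTop
      (nhds (x / Real.sqrt ((1+b)^2 / (b * (b + b*d*ν + 1) * (b*d*ν) * (b*ν)))
        + b*ν*(b + b*d*ν + 1)/(1+b))) := by
  have hc : (0:ℝ) < Real.sqrt ((1+b)^2 / (b * (b + b*d*ν + 1) * (b*d*ν) * (b*ν))) :=
    Real.sqrt_pos.mpr (by positivity)
  have h1 : Filter.Tendsto (fun _ : ℝ => x) Filter.atTop (nhds x) := tendsto_const_nhds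
  have h := (h1.div (lim_rho hb hd hν) hc.ne').sub (lim_sigma hb hd hν)
  rw [sub_neg_eq_add] at h
  exact h.congr fun α => by simp [Pi.div_apply, racahY, sub_div, div_div, mul_comm]

lemma lim_D {b d ν : ℝ} :
    Filter.Tendsto (fun α : ℝ => racahD b d ν α / α) Filter.atTop (nhds (b*d*ν+1)) := by
  have h := tendsto_affine_div (b*d*ν+1) (-(b*ν))
  exact h.congr fun α => by rw [racahD]; ring_nf

lemma lim_E {b d ν : ℝ} (hb : 0 < b) (hd : 0 < d) (hν : 0 < ν) (x : ℝ) :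
    Filter.Tendsto
      (fun α : ℝ => (racahD b d ν α ^ 2 + 4 * racahY b d ν x α) / α ^ 2) Filter.atTop
      (nhds ((b*d*ν+1)^2)) := by
  have h := ((lim_D (b := b) (d := d) (ν := ν)).pow 2).add
    (((lim_y hb hd hν x).mul tendsto_inv_atTop_zero).const_mul 4)
  rw [mul_zero, mul_zero, add_zero] at h
  refine Filter.Tendsto.congr' ?_ h
  filter_upwards [Filter.eventually_gt_atTop 0] with α hα
  have hα' : α ≠ 0 := hα.ne'
  field_simp

lemma ev_E_pos {b d ν : ℝ} (hb : 0 < b) (hd : 0 < d) (hν : 0 < ν) (x : ℝ) :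
    ∀ᶠ α : ℝ in Filter.atTop, 0 < racahD b d ν α ^ 2 + 4 * racahY b d ν x α := by
  have h := (lim_E hb hd hν x).eventually
    (eventually_gt_nhds (by positivity : (0:ℝ) < (b*d*ν+1)^2))
  filter_upwards [h, Filter.eventually_gt_atTop 0] with α h1 h2
  have h3 := mul_pos h1 (pow_pos h2 2)
  rwa [div_mul_cancel₀ _ (pow_pos h2 2).ne'] at h3

lemma ev_D_pos {b d ν : ℝ} (hb : 0 < b) (hd : 0 < d) (hν : 0 < ν) :
    ∀ᶠ α : ℝ in Filter.atTop, 0 < racahD b d ν α := by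
  have h := (lim_D (b := b) (d := d) (ν := ν)).eventually
    (eventually_gt_nhds (by positivity : (0:ℝ) < b*d*ν+1))
  filter_upwards [h, Filter.eventually_gt_atTop 0] with α h1 h2
  have h3 := mul_pos h1 h2
  rwa [div_mul_cancel₀ _ h2.ne'] at h3

lemma sqrt_quad_div {Dv y α : ℝ} (hα : 0 < α) (hE : 0 ≤ Dv^2 + 4*y) (hD : 0 < Dv) :
    (Real.sqrt (Dv^2 + 4*y) - Dv)/2
      = 2*(y/α) / (Real.sqrt ((Dv^2 + 4*y)/α^2) + Dv/α) := by
  have hq := Real.sq_sqrt hE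
  have hs := Real.sqrt_nonneg (Dv^2+4*y)
  have h1 : Real.sqrt ((Dv^2+4*y)/α^2) = Real.sqrt (Dv^2+4*y) * α⁻¹ := by
    rw [div_eq_mul_inv, ← inv_pow, Real.sqrt_mul hE, Real.sqrt_sq (inv_nonneg.mpr hα.le)]
  rw [h1]
  have hpos : 0 < Real.sqrt (Dv^2+4*y) + Dv := by linarith
  have hd2 : Real.sqrt (Dv^2+4*y) * α⁻¹ + Dv/α ≠ 0 := by
    have : Real.sqrt (Dv^2+4*y) * α⁻¹ + Dv/α = (Real.sqrt (Dv^2+4*y) + Dv) * α⁻¹ := by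
      rw [div_eq_mul_inv, add_mul]
    rw [this]
    positivity
  rw [div_eq_div_iff (by norm_num : (2:ℝ) ≠ 0) hd2]
  field_simp
  linear_combination hq

lemma lim_s {b d ν : ℝ} (hb : 0 < b) (hd : 0 < d) (hν : 0 < ν) (x : ℝ) :
    Filter.Tendsto (racahS b d ν x) Filter.atTop
      (nhds ((x / Real.sqrt ((1+b)^2 / (b * (b + b*d*ν + 1) * (b*d*ν) * (b*ν)))
        + b*ν*(b + b*d*ν + 1)/(1+b)) / (b*d*ν+1))) := by
  have hB : (0:ℝ) < b*d*ν+1 := by positivity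
  have hnum := (lim_y hb hd hν x).const_mul 2
  have hden := (lim_E hb hd hν x).sqrt.add (lim_D (b := b) (d := d) (ν := ν))
  have hdenne : Real.sqrt ((b*d*ν+1)^2) + (b*d*ν+1) ≠ 0 := by
    rw [Real.sqrt_sq hB.le]; linarith
  have h := hnum.div hden hdenne
  have hval : 2 * (x / Real.sqrt ((1+b)^2 / (b * (b + b*d*ν + 1) * (b*d*ν) * (b*ν)))
        + b*ν*(b + b*d*ν + 1)/(1+b)) / (Real.sqrt ((b*d*ν+1)^2) + (b*d*ν+1))
      = (x / Real.sqrt ((1+b)^2 / (b * (b + b*d*ν + 1) * (b*d*ν) * (b*ν)))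
        + b*ν*(b + b*d*ν + 1)/(1+b)) / (b*d*ν+1) := by
    rw [Real.sqrt_sq hB.le]
    field_simp
    ring
  rw [hval] at h
  refine Filter.Tendsto.congr' ?_ h
  filter_upwards [Filter.eventually_gt_atTop 0, ev_E_pos hb hd hν x, ev_D_pos hb hd hν]
    with α hα hE hD
  simp only [Pi.div_apply]
  rw [racahS]
  exact (sqrt_quad_div hα hE.le hD).symm

noncomputable def racahTerm (b d ν x : ℝ) (n k : ℕ) (α : ℝ) : ℝ :=
  (α * racahRho α b d ν) ^ n * (α ^ n / poch ((n:ℝ) + α + b * α + 1) n) *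
  (poch (-(n:ℝ)) k * poch (-(racahS b d ν x α)) k / k.factorial) *
  (poch ((n:ℝ) + α + b * α + 1) k / α ^ k) *
  (poch (α + (k:ℝ) + 1) (n - k) / α ^ (n - k)) *
  (poch (b * α + (b * d * ν + 1) * α + (k:ℝ) + 1) (n - k) / α ^ (n - k)) *
  poch ((k:ℝ) - b * ν) (n - k) *
  (poch (racahS b d ν x α + racahD b d ν α) k / α ^ k)

lemma quad_root {Dv y : ℝ} (hE : 0 ≤ Dv^2 + 4*y) :
    y = ((Real.sqrt (Dv^2+4*y) - Dv)/2) * (((Real.sqrt (Dv^2+4*y) - Dv)/2) + Dv) := by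
  have hq := Real.sq_sqrt hE
  linear_combination (-1/4) * hq

set_option maxHeartbeats 1000000 in
lemma racah_eventual_sum {b d ν : ℝ} (hb : 0 < b) (hd : 0 < d) (hν : 0 < ν) (n : ℕ) (x : ℝ) :
    ∀ᶠ α : ℝ in Filter.atTop,
      rescaledRacah α b d ν n x = ∑ k ∈ Finset.range (n + 1), racahTerm b d ν x n k α := by
  filter_upwards [Filter.eventually_gt_atTop 0, ev_E_pos hb hd hν x] with α hα hE
  have hα' : α ≠ 0 := hα.ne'
  have hsolve : x / racahRho α b d ν - racahSigma α b d ν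
      = racahS b d ν x α * (racahS b d ν x α + ((b*d*ν+1)*α - b*ν)) := by
    have := quad_root (Dv := racahD b d ν α) (y := racahY b d ν x α) hE.le
    rw [racahS, racahD, racahY] at *
    linarith [this]
  have hP : poch ((n:ℝ) + α + b*α + 1) n ≠ 0 := (poch_pos (by positivity) n).ne'
  simp only [rescaledRacah, monicRacah]
  rw [Finset.mul_sum, Finset.mul_sum]
  refine Finset.sum_congr rfl fun k hk => ?_
  have hkn : k ≤ n := Nat.lt_succ_iff.mp (Finset.mem_range.mp hk)
  rw [racah_factor_prod (racahS b d ν x α) ((b*d*ν+1)*α) (b*ν)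
    (x / racahRho α b d ν - racahSigma α b d ν) hsolve k]
  rw [racahTerm, racahD, mul_pow]
  have hpow : α ^ k * α ^ (n - k) = α ^ n := by
    rw [← pow_add, Nat.add_sub_cancel' hkn]
  rw [← hpow]
  have hfac : ((k.factorial : ℝ)) ≠ 0 := Nat.cast_ne_zero.mpr k.factorial_pos.ne'
  field_simp

lemma lim_term {b d ν : ℝ} (hb : 0 < b) (hd : 0 < d) (hν : 0 < ν) (n k : ℕ) (x : ℝ) :
    Filter.Tendsto (fun α => racahTerm b d ν x n k α) Filter.atTop
      (nhds ((Real.sqrt ((1+b)^2 / (b * (b + b*d*ν + 1) * (b*d*ν) * (b*ν))))^n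
        * (((1+b):ℝ)^n)⁻¹
        * (poch (-(n:ℝ)) k * poch (-((x / Real.sqrt ((1+b)^2 / (b * (b + b*d*ν + 1) * (b*d*ν) * (b*ν)))
              + b*ν*(b + b*d*ν + 1)/(1+b)) / (b*d*ν+1))) k / k.factorial)
        * ((1+b):ℝ)^k * ((1:ℝ))^(n-k) * (b + b*d*ν + 1)^(n-k)
        * poch ((k:ℝ) - b*ν) (n-k) * (b*d*ν+1)^k)) := by
  have h1b : (0:ℝ) < 1 + b := by linarith
  simp only [racahTerm]
  have hu : Filter.Tendsto (fun α : ℝ => ((n:ℝ) + α + b*α + 1)/α) Filter.atTop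
      (nhds (1+b)) := by
    refine (tendsto_affine_div (1+b) ((n:ℝ)+1)).congr fun α => ?_
    ring_nf
  have hu5 : Filter.Tendsto (fun α : ℝ => (α + (k:ℝ) + 1)/α) Filter.atTop (nhds 1) := by
    refine (tendsto_affine_div 1 ((k:ℝ)+1)).congr fun α => ?_
    ring_nf
  have hu6 : Filter.Tendsto (fun α : ℝ => (b*α + (b*d*ν+1)*α + (k:ℝ) + 1)/α) Filter.atTop
      (nhds (b + b*d*ν + 1)) := by
    refine (tendsto_affine_div (b + b*d*ν + 1) ((k:ℝ)+1)).congr fun α => ?_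
    ring_nf
  have hu8 : Filter.Tendsto (fun α : ℝ => (racahS b d ν x α + racahD b d ν α)/α) Filter.atTop
      (nhds (b*d*ν+1)) := by
    have hs0 : Filter.Tendsto (fun α : ℝ => racahS b d ν x α / α) Filter.atTop (nhds 0) :=
      (lim_s hb hd hν x).div_atTop tendsto_id
    have h := hs0.add (lim_D (b := b) (d := d) (ν := ν))
    rw [zero_add] at h
    exact h.congr fun α => (add_div _ _ _).symm
  have F1 := (lim_rho hb hd hν).pow n
  have F2 : Filter.Tendsto (fun α : ℝ => α^n / poch ((n:ℝ) + α + b*α + 1) n) Filter.atTop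
      (nhds ((((1:ℝ)+b)^n)⁻¹)) := by
    refine ((tendsto_poch_div_pow hu n).inv₀ (by positivity)).congr fun α => ?_
    rw [inv_div]
  have F3c : Filter.Tendsto (fun _ : ℝ => poch (-(n:ℝ)) k) Filter.atTop
      (nhds (poch (-(n:ℝ)) k)) := tendsto_const_nhds
  have F3 := (F3c.mul (tendsto_poch_comp (lim_s hb hd hν x).neg k)).div_const (k.factorial : ℝ)
  have F7 : Filter.Tendsto (fun _ : ℝ => poch ((k:ℝ) - b*ν) (n-k)) Filter.atTop
      (nhds (poch ((k:ℝ) - b*ν) (n-k))) := tendsto_const_nhds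
  have F4 := tendsto_poch_div_pow hu k
  have F5 := tendsto_poch_div_pow hu5 (n - k)
  have F6 := tendsto_poch_div_pow hu6 (n - k)
  have F8 := tendsto_poch_div_pow hu8 k
  exact ((((((F1.mul F2).mul F3).mul F4).mul F5).mul F6).mul F7).mul F8

/-- as `α → ∞`, the rescaled monic Racah polynomials tend to rescaled monic
Krawtchouk polynomials with `N = bν`. -/
theorem rescaled_racah_to_krawtchouk (b d ν : ℝ) (hb : 0 < b) (hd : 0 < d) (hν : 0 < ν)
    (n : ℕ) :
    ∃ ρ' σ' p : ℝ, ρ' ≠ 0 ∧ p ≠ 0 ∧ ∀ x : ℝ,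
      Filter.Tendsto (fun α : ℝ => rescaledRacah α b d ν n x) Filter.atTop
        (nhds (ρ' ^ n * monicKrawtchouk p (b * ν) n (x / ρ' - σ'))) := by
  have h1b : (0:ℝ) < 1 + b := by linarith
  have hcc : (0:ℝ) < (1+b)^2 / (b * (b + b*d*ν + 1) * (b*d*ν) * (b*ν)) := by positivity
  have hc : (0:ℝ) < Real.sqrt ((1+b)^2 / (b * (b + b*d*ν + 1) * (b*d*ν) * (b*ν))) :=
    Real.sqrt_pos.mpr hcc
  have hB : (0:ℝ) < b*d*ν+1 := by positivity
  have hK : (0:ℝ) < b + b*d*ν + 1 := by positivity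
  have hp : (0:ℝ) < (b + b*d*ν + 1)/((1+b)*(b*d*ν+1)) := by positivity
  refine ⟨Real.sqrt ((1+b)^2 / (b * (b + b*d*ν + 1) * (b*d*ν) * (b*ν))) * (b*d*ν+1),
    -(b*ν) * ((b + b*d*ν + 1)/((1+b)*(b*d*ν+1))),
    (b + b*d*ν + 1)/((1+b)*(b*d*ν+1)),
    (mul_pos hc hB).ne', hp.ne', fun x => ?_⟩
  have hX : x / (Real.sqrt ((1+b)^2 / (b * (b + b*d*ν + 1) * (b*d*ν) * (b*ν))) * (b*d*ν+1))
      - (-(b*ν) * ((b + b*d*ν + 1)/((1+b)*(b*d*ν+1))))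
      = (x / Real.sqrt ((1+b)^2 / (b * (b + b*d*ν + 1) * (b*d*ν) * (b*ν)))
          + b*ν*(b + b*d*ν + 1)/(1+b)) / (b*d*ν+1) := by
    field_simp
    ring
  rw [hX]
  have hsum := tendsto_finset_sum (Finset.range (n+1))
    (fun k _ => lim_term hb hd hν n k x)
  have hev : (fun α : ℝ => ∑ k ∈ Finset.range (n + 1), racahTerm b d ν x n k α)
      =ᶠ[Filter.atTop] fun α => rescaledRacah α b d ν n x := by
    filter_upwards [racah_eventual_sum hb hd hν n x] with α h
    exact h.symm
  refine Filter.Tendsto.congr' hev ?_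
  have hval : (Real.sqrt ((1+b)^2 / (b * (b + b*d*ν + 1) * (b*d*ν) * (b*ν))) * (b*d*ν+1)) ^ n
      * monicKrawtchouk ((b + b*d*ν + 1)/((1+b)*(b*d*ν+1))) (b*ν) n
        ((x / Real.sqrt ((1+b)^2 / (b * (b + b*d*ν + 1) * (b*d*ν) * (b*ν)))
          + b*ν*(b + b*d*ν + 1)/(1+b)) / (b*d*ν+1))
      = ∑ k ∈ Finset.range (n+1),
        ((Real.sqrt ((1+b)^2 / (b * (b + b*d*ν + 1) * (b*d*ν) * (b*ν))))^n
        * (((1+b):ℝ)^n)⁻¹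
        * (poch (-(n:ℝ)) k * poch (-((x / Real.sqrt ((1+b)^2 / (b * (b + b*d*ν + 1) * (b*d*ν) * (b*ν)))
              + b*ν*(b + b*d*ν + 1)/(1+b)) / (b*d*ν+1))) k / k.factorial)
        * ((1+b):ℝ)^k * ((1:ℝ))^(n-k) * (b + b*d*ν + 1)^(n-k)
        * poch ((k:ℝ) - b*ν) (n-k) * (b*d*ν+1)^k) := by
    rw [monicKrawtchouk, Finset.mul_sum, Finset.mul_sum]
    refine Finset.sum_congr rfl fun k hk => ?_
    have hkn : k ≤ n := Nat.lt_succ_iff.mp (Finset.mem_range.mp hk)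
    obtain ⟨e, rfl⟩ := Nat.exists_eq_add_of_le hkn
    generalize Real.sqrt ((1+b)^2 / (b * (b + b*d*ν + 1) * (b*d*ν) * (b*ν))) = s
    simp only [Nat.add_sub_cancel_left, one_pow, pow_add, mul_pow, div_pow, one_div, inv_div]
    field_simp
  rw [hval]
  exact hsum
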